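/- arXiv:0711.4456 — 5 statements merged into one kernel-verified Lean document; each statement's English description precedes it below -/
import Mathlib

section
/- Let A be a ring, J a finitely generated ideal of A, and (M_i)_{i∈I} a family of A-modules. Then the submodule J·(∏_i M_i) of the product module equals the product ∏_i (J·M_i). -/
/-! With generators `s` of `J`, an element of `J • M` is exactly a sum `∑ a ∈ s, a • y a`.
Choosing such a representation in each coordinate, with the same finitely many generators,
assembles into one for the whole family. -/

open Submodule

theorem Submodule.mem_span_finset_smul_top_iff {A M : Type*} [CommSemiring A] [AddCommMonoid M]
    [Module A M] {s : Finset A} {x : M} :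
    x ∈ Ideal.span (s : Set A) • (⊤ : Submodule A M) ↔ ∃ y : s → M, ∑ j : s, (j : A) • y j = x := by
  rw [span_smul_eq, smul_top_eq_range_lsum, LinearMap.mem_range]
  constructor
  · rintro ⟨f, rfl⟩
    exact ⟨f, by simp [Finsupp.sum_fintype]⟩
  · rintro ⟨y, rfl⟩
    exact ⟨Finsupp.equivFunOnFinite.symm y, by simp [Finsupp.sum_fintype]⟩

theorem Submodule.smul_top_pi_le {A ι : Type*} [Semiring A] (J : Ideal A) (M : ι → Type*)
    [∀ i, AddCommMonoid (M i)] [∀ i, Module A (M i)] :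
    (J • ⊤ : Submodule A (∀ i, M i)) ≤ pi Set.univ fun i => (J • ⊤ : Submodule A (M i)) :=
  fun _ hx i _ => smul_top_le_comap_smul_top J (LinearMap.proj i) hx

/-- Let `A` be a ring, `J` a finitely generated ideal of `A`, and `(M i)_{i ∈ ι}` a family of
`A`-modules. Then the submodule `J • (∏ i, M i)` of the product module equals the product
`∏ i, (J • M i)`, i.e. the submodule of families whose `i`-th component lies in `J • M i`. -/
theorem smul_top_pi_eq_pi_smul_top {A : Type*} [CommRing A] (J : Ideal A) (hJ : J.FG)
    {ι : Type*} (M : ι → Type*) [∀ i, AddCommGroup (M i)] [∀ i, Module A (M i)] :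
    (J • ⊤ : Submodule A (∀ i, M i)) =
      Submodule.pi Set.univ (fun i => (J • ⊤ : Submodule A (M i))) := by
  obtain ⟨s, rfl⟩ := hJ
  refine le_antisymm (smul_top_pi_le _ M) fun x hx => ?_
  choose y hy using fun i => mem_span_finset_smul_top_iff.mp (hx i trivial)
  refine mem_span_finset_smul_top_iff.mpr ⟨fun j i => y i j, funext fun i => ?_⟩
  simpa only [Finset.sum_apply, Pi.smul_apply] using hy i
end

section
/- Let A be a Noetherian ring and I ⊆ A an ideal. If 0 → M' → M → N → 0 is a short exact sequence of A-modules with N finitely generated, then the sequence of I-adic completions 0 → M'^ → M^ → N^ → 0 is exact. -/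
open LinearMap Submodule

/-- Generalized Artin–Rees: if the cokernel of `f` is finitely generated over a Noetherian
ring, then the filtration `I ^ n • ⊤ ⊓ range f` is eventually contained in
`I ^ (n - k) • range f`. -/
theorem aux_artinRees {A : Type*} [CommRing A] [IsNoetherianRing A]
    (I : Ideal A) {M' M N : Type*} [AddCommGroup M'] [Module A M'] [AddCommGroup M] [Module A M]
    [AddCommGroup N] [Module A N] [Module.Finite A N]
    (f : M' →ₗ[A] M) (g : M →ₗ[A] N)
    (hg : Function.Surjective g) (hfg : Function.Exact f g) :
    ∃ k, ∀ n ≥ k, (I ^ n • ⊤ : Submodule A M) ⊓ LinearMap.range f ≤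
      I ^ (n - k) • LinearMap.range f := by
  have hker : LinearMap.ker g = LinearMap.range f := LinearMap.exact_iff.mp hfg
  -- a finite free cover of N
  obtain ⟨r, π, hπ⟩ := Module.Finite.exists_fin' A N
  -- lift it through the surjection g
  obtain ⟨h, hh⟩ := Module.projective_lifting_property g π hg
  set K : Submodule A (Fin r → A) := LinearMap.ker (g ∘ₗ h) with hK
  obtain ⟨k, hk⟩ := Ideal.exists_pow_inf_eq_pow_smul I K
  refine ⟨k, fun n hn x hx ↦ ?_⟩
  obtain ⟨hx1, hx2⟩ := hx
  have htop : LinearMap.range f ⊔ LinearMap.range h = ⊤ := by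
    rw [eq_top_iff]
    intro m _
    obtain ⟨y, hy⟩ := hπ (g m)
    have h1 : m - h y ∈ LinearMap.range f := by
      rw [← hker, LinearMap.mem_ker, map_sub, ← LinearMap.comp_apply, hh, hy, sub_self]
    have : m = (m - h y) + h y := by abel
    rw [this]
    exact Submodule.add_mem_sup h1 ⟨y, rfl⟩
  rw [← htop, Submodule.smul_sup] at hx1
  obtain ⟨u, hu, v, hv, huv⟩ := Submodule.mem_sup.mp hx1
  have hu' : u ∈ LinearMap.range f := Submodule.smul_le_right hu
  have hvr : v ∈ LinearMap.range f := by
    have : v = x - u := by rw [← huv]; abel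
    rw [this]; exact sub_mem hx2 hu'
  rw [show (I ^ n • LinearMap.range h : Submodule A M) =
      Submodule.map h (I ^ n • ⊤ : Submodule A (Fin r → A)) by
    rw [Submodule.map_smul'', Submodule.map_top]] at hv
  obtain ⟨b, hb, hbv⟩ := Submodule.mem_map.mp hv
  have hbK : b ∈ K := by
    rw [hK, LinearMap.mem_ker, LinearMap.comp_apply, ← LinearMap.mem_ker, hker, hbv]
    exact hvr
  have hb' : b ∈ I ^ (n - k) • K := by
    have : b ∈ (I ^ n • ⊤ : Submodule A (Fin r → A)) ⊓ K := ⟨hb, hbK⟩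
    rw [hk n hn] at this
    exact Submodule.smul_mono le_rfl inf_le_right this
  have hmapK : Submodule.map h K ≤ LinearMap.range f := by
    intro z hz
    obtain ⟨w, hw, hwz⟩ := Submodule.mem_map.mp hz
    rw [← hker, ← hwz]
    exact hw
  have hv' : v ∈ I ^ (n - k) • LinearMap.range f := by
    rw [← hbv]
    have : h b ∈ Submodule.map h (I ^ (n - k) • K) := Submodule.mem_map_of_mem hb'
    rw [Submodule.map_smul''] at this
    exact Submodule.smul_mono le_rfl hmapK this
  have hu'' : u ∈ I ^ (n - k) • LinearMap.range f :=
    Submodule.smul_mono_left (Ideal.pow_le_pow_right (Nat.sub_le n k)) hu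
  rw [← huv]
  exact add_mem hu'' hv'

/-- Pullback form of the generalized Artin–Rees lemma. -/
theorem aux_artinRees' {A : Type*} [CommRing A] [IsNoetherianRing A]
    (I : Ideal A) {M' M N : Type*} [AddCommGroup M'] [Module A M'] [AddCommGroup M] [Module A M]
    [AddCommGroup N] [Module A N] [Module.Finite A N]
    (f : M' →ₗ[A] M) (g : M →ₗ[A] N)
    (hf : Function.Injective f) (hg : Function.Surjective g) (hfg : Function.Exact f g) :
    ∃ k, ∀ n ≥ k, ∀ x : M', f x ∈ (I ^ n • ⊤ : Submodule A M) →
      x ∈ (I ^ (n - k) • ⊤ : Submodule A M') := by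
  obtain ⟨k, hk⟩ := aux_artinRees I f g hg hfg
  refine ⟨k, fun n hn x hx ↦ ?_⟩
  have h1 : f x ∈ I ^ (n - k) • LinearMap.range f := hk n hn ⟨hx, ⟨x, rfl⟩⟩
  rw [show (I ^ (n - k) • LinearMap.range f : Submodule A M) =
      Submodule.map f (I ^ (n - k) • ⊤ : Submodule A M') by
    rw [Submodule.map_smul'', Submodule.map_top]] at h1
  obtain ⟨y, hy, hyx⟩ := Submodule.mem_map.mp h1
  rwa [hf hyx] at hy

/-- Let `A` be a Noetherian ring and `I ⊆ A` an ideal. If `0 → M' → M → N → 0` is a short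
exact sequence of `A`-modules with `N` finitely generated, then the induced sequence of
`I`-adic completions `0 → M'^ → M^ → N^ → 0` is exact. -/
theorem adicCompletion_exact_of_finite_quotient {A : Type*} [CommRing A] [IsNoetherianRing A]
    (I : Ideal A) {M' M N : Type*} [AddCommGroup M'] [Module A M'] [AddCommGroup M] [Module A M]
    [AddCommGroup N] [Module A N] [Module.Finite A N]
    (f : M' →ₗ[A] M) (g : M →ₗ[A] N)
    (hf : Function.Injective f) (hg : Function.Surjective g) (hfg : Function.Exact f g) :
    Function.Injective (AdicCompletion.map I f) ∧
      Function.Exact (AdicCompletion.map I f) (AdicCompletion.map I g) ∧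
      Function.Surjective (AdicCompletion.map I g) := by
  obtain ⟨k, hk⟩ := aux_artinRees' I f g hf hg hfg
  have hker : LinearMap.ker g = LinearMap.range f := LinearMap.exact_iff.mp hfg
  refine ⟨?_, ?_, AdicCompletion.map_surjective I hg⟩
  · -- injectivity
    rw [injective_iff_map_eq_zero]
    intro x
    apply AdicCompletion.induction_on I M' x (fun a ↦ ?_)
    intro hx
    rw [AdicCompletion.map_mk] at hx
    refine AdicCompletion.mk_zero_of _ _ _ ⟨k, fun n hn ↦ ⟨n + k, by omega, n, by omega, ?_⟩⟩
    have hcomp : f (a (n + k)) ∈ (I ^ (n + k) • ⊤ : Submodule A M) := by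
      have := congrArg (fun y ↦ y.val (n + k)) hx
      simpa [Submodule.Quotient.mk_eq_zero] using this
    have := hk (n + k) (by omega) (a (n + k)) hcomp
    simpa using this
  · -- exactness in the middle
    have key : ∀ y, AdicCompletion.map I g y = 0 → y ∈ Set.range (AdicCompletion.map I f) := by
      intro y
      apply AdicCompletion.induction_on I M y (fun a ↦ ?_)
      intro ha
      rw [AdicCompletion.map_mk] at ha
      have hcomp : ∀ n, g (a n) ∈ (I ^ n • ⊤ : Submodule A N) := by
        intro n
        have := congrArg (fun z ↦ z.val n) ha
        simpa [Submodule.Quotient.mk_eq_zero] using this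
      have hmem : ∀ n, g (a n) ∈ Submodule.map g (I ^ n • ⊤ : Submodule A M) := by
        intro n
        rw [Submodule.map_smul'', Submodule.map_top, LinearMap.range_eq_top.2 hg]
        exact hcomp n
      choose c hc hgc using fun n ↦ Submodule.mem_map.mp (hmem n)
      have hran : ∀ n, a n - c n ∈ LinearMap.range f := by
        intro n
        rw [← hker, LinearMap.mem_ker, map_sub, hgc n, sub_self]
      choose b hb using fun n ↦ hran n
      -- the shifted sequence `n ↦ b (n + k)` is Cauchy
      have hcauchy : ∀ n, b (n + k) ≡ b (n + 1 + k)
          [SMOD (I ^ n • ⊤ : Submodule A M')] := by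
        intro n
        rw [show n + 1 + k = n + k + 1 by omega]
        rw [SModEq.sub_mem]
        have hfx : f (b (n + k) - b (n + k + 1)) ∈ (I ^ (n + k) • ⊤ : Submodule A M) := by
          rw [map_sub, hb, hb]
          have h1 : a (n + k) - a (n + k + 1) ∈ (I ^ (n + k) • ⊤ : Submodule A M) := by
            rw [← SModEq.sub_mem]
            exact a.property (Nat.le_succ _)
          have h2 : c (n + k) ∈ (I ^ (n + k) • ⊤ : Submodule A M) := hc _
          have h3 : c (n + k + 1) ∈ (I ^ (n + k) • ⊤ : Submodule A M) :=
            Submodule.smul_mono_left (Ideal.pow_le_pow_right (by omega)) (hc _)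
          have : a (n + k) - c (n + k) - (a (n + k + 1) - c (n + k + 1)) =
              (a (n + k) - a (n + k + 1)) - c (n + k) + c (n + k + 1) := by abel
          rw [this]
          exact add_mem (sub_mem h1 h2) h3
        have := hk (n + k) (by omega) _ hfx
        simpa using this
      refine ⟨AdicCompletion.mk I M' (AdicCompletion.AdicCauchySequence.mk I M' (fun n ↦ b (n + k)) hcauchy),
        ?_⟩
      rw [AdicCompletion.map_mk]
      ext n
      show Submodule.Quotient.mk (f (b (n + k))) =
        Submodule.Quotient.mk (p := (I ^ n • ⊤ : Submodule A M)) (a n)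
      rw [Submodule.Quotient.eq]
      rw [hb]
      have h1 : a (n + k) - a n ∈ (I ^ n • ⊤ : Submodule A M) := by
        rw [← SModEq.sub_mem]
        exact (a.property (by omega : n ≤ n + k)).symm
      have h2 : c (n + k) ∈ (I ^ n • ⊤ : Submodule A M) :=
        Submodule.smul_mono_left (Ideal.pow_le_pow_right (by omega)) (hc _)
      have : a (n + k) - c (n + k) - a n = (a (n + k) - a n) - c (n + k) := by abel
      rw [this]
      exact sub_mem h1 h2
    intro y
    refine ⟨key y, ?_⟩
    rintro ⟨x, rfl⟩
    rw [AdicCompletion.map_comp_apply]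
    have : g ∘ₗ f = 0 := LinearMap.ext fun z ↦ hfg.apply_apply_eq_zero z
    rw [this, AdicCompletion.map_zero, LinearMap.zero_apply]
end

section
/- Let A be a ring, I a finitely generated ideal, and (M_x)_{x∈S} a family of A-modules. Then the I-adic completion of the product ∏_x M_x embeds naturally into the product of the I-adic completions ∏_x M_x^. -/
/-!
An element of the kernel is represented at level `n` by some `m ∈ ∏ M x` with every component in
`I ^ n • M x`. Writing each component as `∑ j, f j • g x j` over finitely many generators `f j` of
`I ^ n` and regrouping shows `m ∈ I ^ n • ∏ M x`; finite generation is what makes this regrouping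
possible.
-/

open Submodule

theorem Submodule.mem_span_range_smul_top_iff {R M ι : Type*} [CommSemiring R] [AddCommMonoid M]
    [Module R M] [Fintype ι] (f : ι → R) (m : M) :
    m ∈ Ideal.span (Set.range f) • (⊤ : Submodule R M) ↔ ∃ g : ι → M, ∑ i, f i • g i = m := by
  refine ⟨fun hm => ?_, fun ⟨g, hg⟩ => hg ▸ sum_mem fun i _ =>
    smul_mem_smul (Ideal.subset_span ⟨i, rfl⟩) mem_top⟩
  refine smul_induction_on hm (fun r hr n _ => ?_) fun m m' ⟨g, hg⟩ ⟨g', hg'⟩ =>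
    ⟨g + g', by simp [Finset.sum_add_distrib, hg, hg']⟩
  obtain ⟨c, rfl⟩ := Ideal.mem_span_range_iff_exists_fun.mp hr
  exact ⟨fun i => c i • n, by simp [Finset.sum_smul, smul_smul, mul_comm]⟩

theorem Submodule.pi_univ_smul_top_le {R ι : Type*} [CommSemiring R] {M : ι → Type*}
    [∀ i, AddCommMonoid (M i)] [∀ i, Module R (M i)] {J : Ideal R} (hJ : J.FG) :
    pi Set.univ (fun i => J • (⊤ : Submodule R (M i))) ≤ J • ⊤ := by
  obtain ⟨k, f, rfl⟩ := Submodule.fg_iff_exists_fin_generating_family.mp hJ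
  intro m hm
  choose g hg using fun i => (mem_span_range_smul_top_iff f (m i)).mp (hm i trivial)
  exact (mem_span_range_smul_top_iff f m).mpr ⟨fun j i => g i j, funext fun i => by simp [hg]⟩

theorem AdicCompletion.pi_injective {R ι : Type*} [CommRing R] {I : Ideal R} (hI : I.FG)
    (M : ι → Type*) [∀ i, AddCommGroup (M i)] [∀ i, Module R (M i)] :
    Function.Injective (AdicCompletion.pi I M) := by
  refine (injective_iff_map_eq_zero _).mpr fun a ha => AdicCompletion.ext fun n => ?_
  obtain ⟨m, hm⟩ := Submodule.Quotient.mk_surjective _ (a.val n)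
  have hcomp : ∀ i, m i ∈ (I ^ n • ⊤ : Submodule R (M i)) := fun i => by
    have := congrArg (fun b => (b i).val n) ha
    simpa [← hm, Submodule.Quotient.mk_eq_zero] using this
  rw [val_zero_apply, ← hm, Submodule.Quotient.mk_eq_zero]
  exact pi_univ_smul_top_le hI.pow (fun i _ => hcomp i)

/-- Let `A` be a ring, `I` a finitely generated ideal and `(M x)_{x ∈ S}` a family of
`A`-modules. Then the `I`-adic completion of the product `∏ x, M x` embeds naturally into the
product of the `I`-adic completions `∏ x, (M x)^`, via the map whose `x`-component is the
completion of the projection `∏ y, M y → M x`. -/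
theorem adicCompletion_pi_injective {A : Type*} [CommRing A] (I : Ideal A) (hI : I.FG)
    {S : Type*} (M : S → Type*) [∀ x, AddCommGroup (M x)] [∀ x, Module A (M x)] :
    Function.Injective
      (LinearMap.pi (fun x =>
        (AdicCompletion.map I (LinearMap.proj x : (∀ y, M y) →ₗ[A] M x)).restrictScalars A) :
        AdicCompletion I (∀ y, M y) →ₗ[A] ∀ x, AdicCompletion I (M x)) :=
  AdicCompletion.pi_injective hI M
end

section
/- Let A be a Noetherian ring, I an ideal, and C• a cochain complex of A-modules with differentials d_i such that for each i the I-adic topology of C^i induces the I-adic topology on Ker d_i (i.e., the filtration (I^nC^i ∩ Ker d_i) is I-stable), and the cohomology modules H^i(C•) are finitely generated. Then the natural map H^i(C•)^ → H^i((C•)^) from the I-adic completion of cohomology to the cohomology of the I-adically completed complex is an isomorphism. -/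
/-!
Completion is compared with cohomology through the exact sequences `0 → Z → C^{i+1} → C^{i+2}`
and `C^i → Z → H^{i+1} → 0`, where `Z = Ker d_{i+1}`. Completion preserves injectivity of
`X → Y` and exactness of `X → Y → W` as soon as the images carry the induced `I`-adic topology
(`I^n Y ∩ im ≤ I^{n-c} im`): a Cauchy sequence killed by the completed map is then corrected,
up to terms in `I^n`, into the image, and lifted there. This holds for `Z ⊆ C^{i+1}` by
hypothesis, for `Im d_i ⊆ Z` by the Artin–Rees lemma because `H^{i+1}` is finitely generated,
and for `Im d_{i+1} ⊆ C^{i+2}` by combining both facts in degree `i + 2`.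
-/

variable {A : Type*} [CommRing A]

open Submodule LinearMap

section ArtinRees

variable {M : Type*} [AddCommGroup M] [Module A M]

/-- The `I`-adic topology of `M` induces the `I`-adic topology on `N`. -/
def Submodule.IsArtinRees (N : Submodule A M) (I : Ideal A) : Prop :=
  ∃ c, ∀ n ≥ c, (I ^ n • ⊤ : Submodule A M) ⊓ N ≤ I ^ (n - c) • N

variable (I : Ideal A)

theorem Submodule.isArtinRees_top : (⊤ : Submodule A M).IsArtinRees I :=
  ⟨0, fun n _ => by simp⟩

theorem Submodule.IsArtinRees.trans {K L : Submodule A M} (hK : K.IsArtinRees I)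
    (hL : (L.comap K.subtype).IsArtinRees I) (hLK : L ≤ K) : L.IsArtinRees I := by
  obtain ⟨c₁, hc₁⟩ := hK
  obtain ⟨c₂, hc₂⟩ := hL
  refine ⟨c₁ + c₂, fun n hn x ⟨hxI, hxL⟩ => ?_⟩
  have hxK : x ∈ I ^ (n - c₁) • K := hc₁ n (by omega) ⟨hxI, hLK hxL⟩
  have hx : (⟨x, hLK hxL⟩ : K) ∈ I ^ (n - c₁ - c₂) • L.comap K.subtype :=
    hc₂ (n - c₁) (by omega) ⟨(mem_smul_top_iff _ K _).2 hxK, hxL⟩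
  have hxmap := mem_map_of_mem (f := K.subtype) hx
  rw [map_smul'', map_comap_subtype, Nat.sub_sub] at hxmap
  exact smul_mono le_rfl inf_le_right hxmap

theorem Submodule.isArtinRees_of_finite_quotient [IsNoetherianRing A] (N : Submodule A M)
    [Module.Finite A (M ⧸ N)] : N.IsArtinRees I := by
  -- lift generators of `M ⧸ N` along `A ^ t → M`, so that `N ⊔ range ψ = ⊤`, and use
  -- the Artin–Rees lemma for the finite module `A ^ t`
  obtain ⟨t, π, hπ⟩ := Module.Finite.exists_fin' A (M ⧸ N)
  obtain ⟨ψ, hψ⟩ := Module.projective_lifting_property N.mkQ π N.mkQ_surjective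
  have hsup : N ⊔ range ψ = ⊤ := by
    rw [← map_mkQ_eq_top, ← range_comp, hψ, range_eq_top.2 hπ]
  obtain ⟨c, hc⟩ := Ideal.exists_pow_inf_eq_pow_smul I (N.comap ψ)
  refine ⟨c, fun n hn x ⟨hxI, hxN⟩ => ?_⟩
  rw [← hsup, smul_sup, range_eq_map, ← map_smul''] at hxI
  obtain ⟨b, hb, _, ⟨y, hy, rfl⟩, rfl⟩ := mem_sup.1 hxI
  have hyN : y ∈ N.comap ψ := by
    simpa using N.sub_mem hxN (smul_le_right hb)
  have hy' : y ∈ I ^ (n - c) • N.comap ψ := by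
    have h : y ∈ I ^ n • ⊤ ⊓ N.comap ψ := ⟨hy, hyN⟩
    rw [hc n hn] at h
    exact smul_mono le_rfl inf_le_right h
  have hψy := mem_map_of_mem (f := ψ) hy'
  rw [map_smul''] at hψy
  exact add_mem (smul_mono_left (Ideal.pow_le_pow_right (by omega)) hb)
    (smul_mono le_rfl (map_comap_le _ _) hψy)

end ArtinRees

namespace AdicCompletion

variable (I : Ideal A) {M N P : Type*} [AddCommGroup M] [Module A M] [AddCommGroup N]
  [Module A N] [AddCommGroup P] [Module A P]

theorem AdicCauchySequence.sub_mem_pow_smul_top (x : AdicCauchySequence I M) {m n : ℕ}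
    (hmn : m ≤ n) : x n - x m ∈ (I ^ m • ⊤ : Submodule A M) :=
  SModEq.sub_mem.1 (x.property hmn).symm

theorem exists_adicCauchySequence_mk_eq (x : AdicCauchySequence I M) (y : ℕ → M)
    (hy : ∀ n, y n - x n ∈ (I ^ n • ⊤ : Submodule A M)) :
    ∃ y' : AdicCauchySequence I M, ⇑y' = y ∧ mk I M y' = mk I M x := by
  have hcauchy : ∀ n, y n ≡ y (n + 1) [SMOD (I ^ n • ⊤ : Submodule A M)] := by
    intro n
    have hle : (I ^ (n + 1) • ⊤ : Submodule A M) ≤ I ^ n • ⊤ :=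
      smul_mono_left (Ideal.pow_le_pow_right n.le_succ)
    rw [SModEq.sub_mem, show y n - y (n + 1) =
      (y n - x n) - (x (n + 1) - x n) - (y (n + 1) - x (n + 1)) by abel]
    exact sub_mem (sub_mem (hy n) (x.sub_mem_pow_smul_top I n.le_succ)) (hle (hy (n + 1)))
  refine ⟨AdicCauchySequence.mk I M y hcauchy, rfl, ?_⟩
  ext n
  simpa [Submodule.Quotient.eq] using hy n

theorem apply_mem_of_map_mk_eq_zero {f : M →ₗ[A] N} {x : AdicCauchySequence I M}
    (hx : map I f (mk I M x) = 0) (n : ℕ) : f (x n) ∈ (I ^ n • ⊤ : Submodule A N) := by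
  simpa using congrArg (fun z => z.val n) hx

theorem exists_adicCauchySequence_apply_eq (f : M →ₗ[A] N) (y : ℕ → N) (h₀ : y 0 ∈ range f)
    (hy : ∀ n, y (n + 1) - y n ∈ (I ^ n • ⊤ : Submodule A M).map f) :
    ∃ x : AdicCauchySequence I M, ∀ n, f (x n) = y n := by
  obtain ⟨x₀, hx₀⟩ := h₀
  choose δ hδ hfδ using hy
  refine ⟨AdicCauchySequence.mk I M (fun n => x₀ + ∑ j ∈ Finset.range n, δ j) fun n => ?_,
    fun n => ?_⟩
  · rw [SModEq.sub_mem]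
    simpa [Finset.sum_range_succ] using neg_mem (hδ n)
  · induction n with
    | zero => simpa using hx₀
    | succ n ih =>
      simp only [AdicCauchySequence.mk_coe, Finset.sum_range_succ, ← add_assoc, map_add] at ih ⊢
      rw [ih, hfδ]
      abel

theorem mk_mem_range_map_of_isArtinRees {f : M →ₗ[A] N} (hf : (range f).IsArtinRees I)
    (x : AdicCauchySequence I N) (hx : ∀ n, x n ∈ range f) : mk I N x ∈ range (map I f) := by
  obtain ⟨c, hc⟩ := hf
  obtain ⟨y, hy⟩ := exists_adicCauchySequence_apply_eq I f (fun n => x (n + c)) (hx _)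
    fun n => by
      have h := hc (n + c) (by omega)
        ⟨x.sub_mem_pow_smul_top I (n := n + 1 + c) (by omega), sub_mem (hx _) (hx _)⟩
      rwa [Nat.add_sub_cancel, range_eq_map, ← map_smul''] at h
  refine ⟨mk I M y, ?_⟩
  rw [map_mk]
  ext n
  simpa [hy, Submodule.Quotient.eq] using x.sub_mem_pow_smul_top I (Nat.le_add_right n c)

theorem map_injective_of_isArtinRees {f : M →ₗ[A] N} (hf : Function.Injective f)
    (hr : (range f).IsArtinRees I) : Function.Injective (map I f) := by
  obtain ⟨c, hc⟩ := hr
  rw [← ker_eq_bot, ker_eq_bot']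
  intro x hx
  obtain ⟨x, rfl⟩ := mk_surjective I M x
  refine mk_zero_of _ _ _ ⟨0, fun n _ => ⟨n + c, by omega, n, le_rfl, ?_⟩⟩
  have h := hc (n + c) (by omega) ⟨apply_mem_of_map_mk_eq_zero I hx _, mem_range_self f _⟩
  rw [Nat.add_sub_cancel, range_eq_map, ← map_smul''] at h
  obtain ⟨y, hy, hfy⟩ := h
  exact hf hfy ▸ hy

theorem map_exact_of_isArtinRees {f : M →ₗ[A] N} {g : N →ₗ[A] P} (hfg : Function.Exact f g)
    (hf : (range f).IsArtinRees I) (hg : (range g).IsArtinRees I) :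
    Function.Exact (map I f) (map I g) := by
  refine exact_of_comp_eq_zero_of_ker_le_range
    (by rw [map_comp, hfg.linearMap_comp_eq_zero, map_zero]) fun y hy => ?_
  obtain ⟨x, rfl⟩ := mk_surjective I N y
  obtain ⟨c, hc⟩ := hg
  -- `g (x (n + c)) ∈ I ^ n • range g = g (I ^ n • ⊤)`, so `x (n + c)` is `I ^ n`-close to `ker g`
  have hclose : ∀ n, ∃ ν ∈ (I ^ n • ⊤ : Submodule A N), x (n + c) - ν ∈ range f := by
    intro n
    have h := hc (n + c) (by omega) ⟨apply_mem_of_map_mk_eq_zero I hy _, mem_range_self g _⟩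
    rw [Nat.add_sub_cancel, range_eq_map, ← map_smul''] at h
    obtain ⟨ν, hν, hgν⟩ := h
    refine ⟨ν, hν, hfg.linearMap_ker_eq ▸ ?_⟩
    rw [mem_ker, map_sub, hgν, sub_self]
  choose ν hν hνf using hclose
  obtain ⟨x', hx', hmk⟩ := exists_adicCauchySequence_mk_eq I x (fun n => x (n + c) - ν n)
    fun n => by
      rw [sub_right_comm]
      exact sub_mem (x.sub_mem_pow_smul_top I (Nat.le_add_right n c)) (hν n)
  rw [← hmk]
  exact mk_mem_range_map_of_isArtinRees I hf x' (by simpa [hx'] using hνf)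

end AdicCompletion

theorem LinearMap.exists_equiv_homology_of_exact {R M N P K Q : Type*} [CommRing R]
    [AddCommGroup M] [Module R M] [AddCommGroup N] [Module R N] [AddCommGroup P] [Module R P]
    [AddCommGroup K] [Module R K] [AddCommGroup Q] [Module R Q]
    {f : M →ₗ[R] N} {g : N →ₗ[R] P} {φ : M →ₗ[R] K} {κ : K →ₗ[R] N} {π : K →ₗ[R] Q}
    (hκ : Function.Injective κ) (hκg : Function.Exact κ g) (hφπ : Function.Exact φ π)
    (hπ : Function.Surjective π) (hκφ : κ ∘ₗ φ = f) :
    ∃ e : Q ≃ₗ[R] ker g ⧸ (range f).comap (ker g).subtype,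
      ∀ y, e (π y) = Submodule.Quotient.mk ⟨κ y, mem_ker.2 (hκg.apply_apply_eq_zero y)⟩ := by
  let eK : K ≃ₗ[R] ker g := (LinearEquiv.ofInjective κ hκ).trans
    (LinearEquiv.ofEq _ _ hκg.linearMap_ker_eq.symm)
  have heK : (ker π).map (eK : K →ₗ[R] ker g) = (range f).comap (ker g).subtype := by
    ext z
    rw [hφπ.linearMap_ker_eq, mem_comap, ← hκφ, range_comp, mem_map, mem_map]
    exact exists_congr fun k => and_congr_right fun _ => Subtype.ext_iff
  refine ⟨(π.quotKerEquivOfSurjective hπ).symm.trans (Quotient.equiv _ _ eK heK), fun y => ?_⟩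
  have hπy : (π.quotKerEquivOfSurjective hπ).symm (π y) = Submodule.Quotient.mk y :=
    (LinearEquiv.symm_apply_eq _).2 rfl
  rw [LinearEquiv.trans_apply, hπy]
  rfl

/-- Let `A` be a Noetherian ring, `I` an ideal, and `C•` a cochain complex of `A`-modules
(with differentials `d i : C i → C (i+1)`, `d ∘ d = 0`) such that for each `i` the `I`-adic
topology of `C (i+1)` induces the `I`-adic topology on `Ker (d (i+1))` (the filtration
`I^n C^{i+1} ⊓ Ker d_{i+1}` is `I`-stable) and the cohomology `H^{i+1}(C•) = Ker d_{i+1} / Im d_i`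
is a finitely generated `A`-module.  Then the natural map
`H^{i+1}(C•)^ → H^{i+1}((C•)^)` from the `I`-adic completion of cohomology to the cohomology of
the `I`-adically completed complex is an isomorphism: there is a linear isomorphism compatible
with the canonical maps from `H^{i+1}(C•)`. -/
theorem adicCompletion_cohomology_iso [IsNoetherianRing A] (I : Ideal A)
    (C : ℕ → Type*) [∀ i, AddCommGroup (C i)] [∀ i, Module A (C i)]
    (d : ∀ i, C i →ₗ[A] C (i + 1))
    (hcx : ∀ i, (d (i + 1)).comp (d i) = 0)
    (hAR : ∀ i, ∃ n₀, ∀ n ≥ n₀,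
      (I ^ n • ⊤ : Submodule A (C (i + 1))) ⊓ LinearMap.ker (d (i + 1)) ≤
        I ^ (n - n₀) • LinearMap.ker (d (i + 1)))
    (hfg : ∀ i, Module.Finite A
      ((LinearMap.ker (d (i + 1))) ⧸
        ((LinearMap.range (d i)).comap (LinearMap.ker (d (i + 1))).subtype)))
    (i : ℕ) :
    ∃ e : AdicCompletion I
        ((LinearMap.ker (d (i + 1))) ⧸
          ((LinearMap.range (d i)).comap (LinearMap.ker (d (i + 1))).subtype)) ≃ₗ[A]
        ((LinearMap.ker ((AdicCompletion.map I (d (i + 1))).restrictScalars A)) ⧸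
          ((LinearMap.range ((AdicCompletion.map I (d i)).restrictScalars A)).comap
            (LinearMap.ker ((AdicCompletion.map I (d (i + 1))).restrictScalars A)).subtype)),
      -- compatibility with the canonical maps from `H^{i+1}(C•)`, i.e. `e` is the natural map
      ∀ x : LinearMap.ker (d (i + 1)),
        e (AdicCompletion.of I _ (Submodule.Quotient.mk x)) =
          Submodule.Quotient.mk
            ⟨AdicCompletion.of I (C (i + 1)) x.1, by
              have hx : d (i + 1) x.1 = 0 := x.2
              simp only [LinearMap.mem_ker, LinearMap.restrictScalars_apply]
              ext n
              simp [hx]⟩ := by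
  set K := ker (d (i + 1))
  set B := (range (d i)).comap K.subtype
  let f' : C i →ₗ[A] K := (d i).codRestrict K fun x => LinearMap.congr_fun (hcx i) x
  have hf' : range f' = B := by
    ext y
    simp only [mem_range, mem_comap, coe_subtype, f', B, Subtype.ext_iff]
    rfl
  have hK : (range K.subtype).IsArtinRees I := by
    rw [range_subtype]; exact hAR i
  have hB : (range f').IsArtinRees I := hf' ▸ isArtinRees_of_finite_quotient I B
  have hd : (range (d (i + 1))).IsArtinRees I :=
    IsArtinRees.trans I (hAR (i + 1)) (isArtinRees_of_finite_quotient I _)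
      (range_le_ker_iff.2 (hcx (i + 1)))
  obtain ⟨e, he⟩ := exists_equiv_homology_of_exact
    (f := (AdicCompletion.map I (d i)).restrictScalars A)
    (g := (AdicCompletion.map I (d (i + 1))).restrictScalars A)
    (φ := (AdicCompletion.map I f').restrictScalars A)
    (κ := (AdicCompletion.map I K.subtype).restrictScalars A)
    (π := (AdicCompletion.map I B.mkQ).restrictScalars A)
    (AdicCompletion.map_injective_of_isArtinRees I K.injective_subtype hK)
    (AdicCompletion.map_exact_of_isArtinRees I (exact_subtype_ker_map _) hK hd)
    (AdicCompletion.map_exact_of_isArtinRees I (exact_iff.2 (by rw [ker_mkQ, hf'])) hB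
      (range_mkQ B ▸ isArtinRees_top I))
    (AdicCompletion.map_surjective I B.mkQ_surjective)
    (by rw [← restrictScalars_comp, AdicCompletion.map_comp]; rfl)
  refine ⟨e, fun x => ?_⟩
  have h := he (AdicCompletion.of I K x)
  simp only [restrictScalars_apply, AdicCompletion.map_of] at h
  exact h
end

section
/- Let X be a topological space, F a flasque sheaf of abelian groups on X, and suppose F is equipped with a decreasing filtration by subsheaves F ⊇ F_1 ⊇ F_2 ⊇ … such that each quotient F/F_n is flasque and for every open V, Γ(V, F_n) equals the image of a fixed submodule structure making restriction maps of Γ(−,F)/Γ(−,F_n) surjective. Then the inverse limit sheaf F^ = lim_n F/F_n is flasque. -/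
open TopologicalSpace CategoryTheory Opposite

/-- The inverse limit of an `ℕ`-indexed inverse system of abelian groups, realized as the
subgroup of the product consisting of compatible sequences. -/
def invLimAdd {P : ℕ → Type*} [∀ n, AddCommGroup (P n)] (t : ∀ n, P (n + 1) →+ P n) :
    AddSubgroup (∀ n, P n) where
  carrier := {p | ∀ n, t n (p (n + 1)) = p n}
  add_mem' := fun {a b} ha hb n => by simp [ha n, hb n]
  zero_mem' := fun n => by simp
  neg_mem' := fun {a} ha n => by simp [ha n]

/-!
Represent a compatible sequence of classes `q n ∈ Γ(V, F)/Γ(V, F_n)` by sections `b n`; then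
`b (n+1) - b n ∈ Γ(V, F_n)`. Lift `b 0` to `Γ(U, F)` by flasqueness and each difference to
`Γ(U, F_n)`; the partial sums of these lifts restrict exactly to the `b n` and form a
compatible sequence over `U`.
-/

namespace QuotientAddGroup

variable {A : Type*} [AddCommGroup A]

abbrev towerMap (S : ℕ → AddSubgroup A) (hS : ∀ n, S (n + 1) ≤ S n) (n : ℕ) :
    A ⧸ S (n + 1) →+ A ⧸ S n :=
  map (S (n + 1)) (S n) (AddMonoidHom.id A) (hS n)

theorem mk_mem_invLimAdd_towerMap_iff {S : ℕ → AddSubgroup A} (hS : ∀ n, S (n + 1) ≤ S n)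
    (a : ℕ → A) :
    (fun n => (a n : A ⧸ S n)) ∈ invLimAdd (towerMap S hS) ↔ ∀ n, a (n + 1) - a n ∈ S n :=
  forall_congr' fun _ => eq_iff_sub_mem

theorem exists_mk_eq_and_sub_mem_of_mem_invLimAdd {S : ℕ → AddSubgroup A}
    {hS : ∀ n, S (n + 1) ≤ S n} {q : ∀ n, A ⧸ S n} (hq : q ∈ invLimAdd (towerMap S hS)) :
    ∃ b : ℕ → A, (∀ n, (b n : A ⧸ S n) = q n) ∧ ∀ n, b (n + 1) - b n ∈ S n := by
  choose b hb using fun n => mk_surjective (q n)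
  refine ⟨b, hb, (mk_mem_invLimAdd_towerMap_iff hS b).mp ?_⟩
  simpa only [hb] using hq

end QuotientAddGroup

theorem AddMonoidHom.exists_lift_of_sub_mem {A B : Type*} [AddCommGroup A] [AddCommGroup B]
    (r : A →+ B) (hr : Function.Surjective r) {SA : ℕ → AddSubgroup A}
    {SB : ℕ → AddSubgroup B} (himage : ∀ n, (SA n).map r = SB n) {b : ℕ → B}
    (hb : ∀ n, b (n + 1) - b n ∈ SB n) :
    ∃ a : ℕ → A, (∀ n, r (a n) = b n) ∧ ∀ n, a (n + 1) - a n ∈ SA n := by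
  obtain ⟨a₀, ha₀⟩ := hr (b 0)
  have hlift : ∀ n, ∃ d ∈ SA n, r d = b (n + 1) - b n := fun n => by
    simpa only [← himage n, AddSubgroup.mem_map] using hb n
  choose d hdS hd using hlift
  refine ⟨fun n => a₀ + ∑ k ∈ Finset.range n, d k, fun n => ?_, fun n => ?_⟩
  · change r (a₀ + ∑ k ∈ Finset.range n, d k) = b n
    induction n with
    | zero => simpa using ha₀
    | succ n ih =>
      rw [Finset.sum_range_succ, ← add_assoc, map_add, ih, hd]
      abel
  · simpa [Finset.sum_range_succ] using hdS n

open QuotientAddGroup in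
theorem exists_mem_invLimAdd_map_eq {A B : Type*} [AddCommGroup A] [AddCommGroup B]
    (r : A →+ B) (hr : Function.Surjective r) {SA : ℕ → AddSubgroup A}
    {SB : ℕ → AddSubgroup B} (hSA : ∀ n, SA (n + 1) ≤ SA n) (hSB : ∀ n, SB (n + 1) ≤ SB n)
    (himage : ∀ n, (SA n).map r = SB n) (hmap : ∀ n, SA n ≤ (SB n).comap r)
    {q : ∀ n, B ⧸ SB n} (hq : q ∈ invLimAdd (towerMap SB hSB)) :
    ∃ p ∈ invLimAdd (towerMap SA hSA), ∀ n, map (SA n) (SB n) r (hmap n) (p n) = q n := by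
  obtain ⟨b, hbq, hb⟩ := exists_mk_eq_and_sub_mem_of_mem_invLimAdd hq
  obtain ⟨a, hab, ha⟩ := r.exists_lift_of_sub_mem hr himage hb
  refine ⟨fun n => a n, (mk_mem_invLimAdd_towerMap_iff hSA a).mpr ha, fun n => ?_⟩
  rw [map_mk, hab, hbq]

/-- Let `X` be a topological space and `F` a flasque presheaf of abelian groups on `X`,
equipped with a decreasing filtration by sub-presheaves `F ⊇ F_1 ⊇ F_2 ⊇ ⋯` (given by subgroups
`S n U ≤ Γ(U, F)` compatible with restriction) such that for every `V ⊆ U` the restriction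
carries `Γ(U, F_n)` onto `Γ(V, F_n)` (equivalently, each quotient `F/F_n` is flasque and
sections of the quotients lift).  Then the completion `F^`, with
`Γ(V, F^) = lim_n Γ(V, F)/Γ(V, F_n)`, is flasque: for all opens `V ⊆ U` the restriction map
`Γ(U, F^) → Γ(V, F^)` is surjective. -/
theorem completion_flasque {X : TopCat} (F : (Opens X)ᵒᵖ ⥤ AddCommGrpCat)
    (hflasque : ∀ (U V : Opens X) (h : V ≤ U), Function.Surjective (F.map h.hom.op).hom)
    (S : ℕ → ∀ U : Opens X, AddSubgroup (F.obj (op U)))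
    (hmono : ∀ n U, S (n + 1) U ≤ S n U)
    (himage : ∀ n (U V : Opens X) (h : V ≤ U), (S n U).map (F.map h.hom.op).hom = S n V)
    (U V : Opens X) (h : V ≤ U) :
    ∀ q : ∀ n, F.obj (op V) ⧸ S n V,
      q ∈ invLimAdd (fun n =>
        QuotientAddGroup.map (S (n + 1) V) (S n V) (AddMonoidHom.id _) (hmono n V)) →
      ∃ p : ∀ n, F.obj (op U) ⧸ S n U,
        p ∈ invLimAdd (fun n =>
          QuotientAddGroup.map (S (n + 1) U) (S n U) (AddMonoidHom.id _) (hmono n U)) ∧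
        ∀ n, QuotientAddGroup.map (S n U) (S n V) (F.map h.hom.op).hom
            (fun x hx => by
              simp only [AddSubgroup.mem_comap]
              exact (himage n U V h) ▸ AddSubgroup.mem_map_of_mem _ hx) (p n) = q n :=
  fun _ hq => exists_mem_invLimAdd_map_eq _ (hflasque U V h) (hmono · U) (hmono · V)
    (himage · U V h) _ hq
end
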